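/- arXiv:2401.15816 — 5 statements merged into one kernel-verified Lean document; each statement's English description precedes it below -/
import Mathlib

section
/- Let a, t > 0 with a < t + 1. Then f(h,a,t) < 0 for every h ∈ (0,1), and g_o(a,t) > 0, i.e., there exists h ∈ (0,1] with g(h,a,t) > 0. -/
open MeasureTheory ProbabilityTheory

noncomputable section

/-- Tail sum `∑_{i>d} θ_i²` (indices `i = 1,2,…`). -/
def tailSum (θ : ℕ → ℝ) (d : ℕ) : ℝ := ∑' i : ℕ, if d < i then θ i ^ 2 else 0

/-- The τ-quantization error `r_τ(d,θ) = ∑_{i>d} θ_i² + τ d ε²`. -/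
def rErr (ε τ : ℝ) (θ : ℕ → ℝ) (d : ℕ) : ℝ := tailSum θ d + τ * d * ε ^ 2

/-- The local effective τ-dimension: the smallest `d ≥ 1` minimizing `r_τ(·,θ)` over `d ≥ 1`. -/
def effDim (ε τ : ℝ) (θ : ℕ → ℝ) : ℕ :=
  sInf {d : ℕ | 1 ≤ d ∧ ∀ d' : ℕ, 1 ≤ d' → rErr ε τ θ d ≤ rErr ε τ θ d'}

/-- The penalized criterion `crit_A(x,d) = -∑_{i=1}^d x_i² + A ε² d`. -/
def critF (ε A : ℝ) (x : ℕ → ℝ) (d : ℕ) : ℝ :=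
  -(∑ i ∈ Finset.Icc 1 d, x i ^ 2) + A * ε ^ 2 * d

/-- `f(h,a,t) = (1/2)(a h + log(1-h) - t h/(1-h))`. -/
def fFun (h a t : ℝ) : ℝ := (a * h + Real.log (1 - h) - t * h / (1 - h)) / 2

/-- `g(h,a,t) = f(-h,a,t)`. -/
def gFun (h a t : ℝ) : ℝ := fFun (-h) a t

/-- `f_o(a,t) = sup_{h ∈ [0,1)} f(h,a,t)`. -/
def fSup (a t : ℝ) : ℝ := sSup ((fun h => fFun h a t) '' Set.Ico 0 1)

/-- `g_o(a,t) = sup_{h ∈ [0,1]} g(h,a,t)`. -/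
def gSup (a t : ℝ) : ℝ := sSup ((fun h => gFun h a t) '' Set.Icc 0 1)

/-- `P` is the infinite product measure `⨂_{i≥1} N(θ_i, ε²)` on the sequence space `ℝ^ℕ`,
characterized by being a probability measure whose finite-dimensional projections onto
the coordinates `1,…,n` are the corresponding finite products of Gaussians. -/
def IsGaussianProduct (ε : ℝ) (θ : ℕ → ℝ) (P : Measure (ℕ → ℝ)) : Prop :=
  IsProbabilityMeasure P ∧
  ∀ n : ℕ, P.map (fun x (i : Fin n) => x ((i : ℕ) + 1)) =
    Measure.pi fun i : Fin n => gaussianReal (θ ((i : ℕ) + 1)) ((ε ^ 2).toNNReal)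

theorem stmt0 (a t : ℝ) (ha : 0 < a) (ht : 0 < t) (hat : a < t + 1) :
    (∀ h : ℝ, 0 < h → h < 1 → fFun h a t < 0) ∧
    0 < gSup a t ∧ (∃ h : ℝ, 0 < h ∧ h ≤ 1 ∧ 0 < gFun h a t) := by

  have δpos : 0 < t + 1 - a := by linarith
  have part1 : ∀ h : ℝ, 0 < h → h < 1 → fFun h a t < 0 := by
    intro h h0 h1
    have hx : 0 < 1 - h := by linarith
    have hlog : Real.log (1 - h) < -h := by
      have := Real.log_lt_sub_one_of_pos hx (by intro he; simp at he; linarith)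
      linarith
    have hfrac : t * h ≤ t * h / (1 - h) := by
      rw [le_div_iff₀ hx]
      nlinarith [mul_nonneg (mul_nonneg ht.le h0.le) h0.le]
    unfold fFun
    have : a * h + Real.log (1 - h) - t * h / (1 - h) < 0 := by nlinarith
    linarith
  set h₀ := min 1 ((t + 1 - a) / (2 * a)) with hh₀
  have h₀pos : 0 < h₀ := lt_min one_pos (by positivity)
  have h₀le : h₀ ≤ 1 := min_le_left _ _
  have h₀lt : a * h₀ < t + 1 - a := by
    have h1 : h₀ ≤ (t + 1 - a) / (2 * a) := min_le_right _ _
    have h3 : a * ((t + 1 - a) / (2 * a)) = (t + 1 - a) / 2 := by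
      field_simp
    have h2 := mul_le_mul_of_nonneg_left h1 ha.le
    rw [h3] at h2
    linarith
  have hp : (0:ℝ) < 1 + h₀ := by linarith
  have hlog : h₀ / (1 + h₀) ≤ Real.log (1 + h₀) := by
    have h1 := Real.log_le_sub_one_of_pos (show (0:ℝ) < (1 + h₀)⁻¹ by positivity)
    rw [Real.log_inv] at h1
    have h2 : (1 + h₀)⁻¹ = 1 - h₀ / (1 + h₀) := by field_simp; ring
    rw [h2] at h1; linarith
  have hgpos : 0 < gFun h₀ a t := by
    unfold gFun fFun
    have hne : (1:ℝ) - -h₀ = 1 + h₀ := by ring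
    rw [hne]
    have hfr : t * -h₀ / (1 + h₀) = -(t * (h₀ / (1 + h₀))) := by
      field_simp
    rw [hfr]
    have hkey : a * h₀ < (1 + t) * (h₀ / (1 + h₀)) := by
      have hmul : a * h₀ * (1 + h₀) < (1 + t) * h₀ := by
        have h4 : a * (1 + h₀) < 1 + t := by linarith
        nlinarith [mul_lt_mul_of_pos_right h4 h₀pos]
      have h5 := (lt_div_iff₀ hp).mpr hmul
      rw [mul_div_assoc] at h5
      exact h5
    have : 0 < a * -h₀ + Real.log (1 + h₀) - -(t * (h₀ / (1 + h₀))) := by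
      nlinarith
    linarith
  have hcont : ContinuousOn (fun h => gFun h a t) (Set.Icc 0 1) := by
    have hne : ∀ x ∈ Set.Icc (0:ℝ) 1, (1:ℝ) - -x ≠ 0 := by
      intro x hx; have := hx.1; intro he; linarith [(by linarith : (0:ℝ) < 1 - -x)]
    unfold gFun fFun
    apply ContinuousOn.div_const
    apply ContinuousOn.sub
    · apply ContinuousOn.add
      · exact (continuousOn_const.mul continuousOn_id.neg)
      · exact (continuousOn_const.sub continuousOn_id.neg).log hne
    · exact (continuousOn_const.mul continuousOn_id.neg).div
        (continuousOn_const.sub continuousOn_id.neg) hne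
  have hbdd : BddAbove ((fun h => gFun h a t) '' Set.Icc 0 1) :=
    (isCompact_Icc.image_of_continuousOn hcont).bddAbove
  have hle : gFun h₀ a t ≤ gSup a t :=
    le_csSup hbdd ⟨h₀, ⟨h₀pos.le, h₀le⟩, rfl⟩
  exact ⟨part1, by linarith, h₀, h₀pos, h₀le, hgpos⟩
end
end

section
/- Let a, t > 0 with a > t + 1. Then g(h,a,t) < 0 for every h ∈ (0,1], and f_o(a,t) > 0, i.e., there exists h ∈ (0,1) with f(h,a,t) > 0. -/
open MeasureTheory ProbabilityTheory

noncomputable section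

theorem stmt1 (a t : ℝ) (ha : 0 < a) (ht : 0 < t) (hat : t + 1 < a) :
    (∀ h : ℝ, 0 < h → h ≤ 1 → gFun h a t < 0) ∧
    0 < fSup a t ∧ (∃ h : ℝ, 0 < h ∧ h < 1 ∧ 0 < fFun h a t) := by
  have hg : ∀ h : ℝ, 0 < h → h ≤ 1 → gFun h a t < 0 := by
    intro h h0 h1
    have h1p : (0:ℝ) < 1 + h := by linarith
    have hlog : Real.log (1 + h) < h := by
      have := Real.log_lt_sub_one_of_pos h1p (by linarith)
      linarith
    have hdiv : t * h / (1 + h) ≤ t * h :=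
      div_le_self (by positivity) (by linarith)
    have : -(a * h) + Real.log (1 + h) + t * h / (1 + h) < 0 := by
      nlinarith
    simp only [gFun, fFun]
    have : a * -h + Real.log (1 - -h) - t * -h / (1 - -h) < 0 := by
      have e1 : (1:ℝ) - -h = 1 + h := by ring
      rw [e1]
      have e2 : t * -h / (1 + h) = -(t * h / (1 + h)) := by ring
      rw [e2]
      linarith
    linarith
  set h₀ : ℝ := (a - t - 1) / (2 * a) with hh₀
  have h0pos : 0 < h₀ := by
    apply div_pos <;> linarith
  have h0lt : h₀ < 1 := by
    rw [div_lt_one (by linarith)]; linarith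
  have h1m : 1 - h₀ = (a + t + 1) / (2 * a) := by
    rw [hh₀]; field_simp; ring
  have h1mpos : 0 < 1 - h₀ := by linarith
  have hlog : -(h₀ / (1 - h₀)) ≤ Real.log (1 - h₀) := by
    have := Real.one_sub_inv_le_log_of_pos h1mpos
    have hinv : (1 - h₀)⁻¹ = 1 + h₀ / (1 - h₀) := by
      field_simp
      ring
    rw [hinv] at this
    linarith
  have hq : h₀ * (2 * a) = a - t - 1 := by
    rw [hh₀]; field_simp
  have hkey : 0 < a * h₀ - h₀ / (1 - h₀) - t * h₀ / (1 - h₀) := by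
    rw [sub_sub, ← add_div, sub_pos, div_lt_iff₀ h1mpos]
    nlinarith [hq, h0pos, mul_pos h0pos (show (0:ℝ) < a - t - 1 by linarith),
      mul_pos h0pos h0pos]
  have hfpos : 0 < fFun h₀ a t := by
    simp only [fFun]
    have : t * h₀ / (1 - h₀) = t * (h₀ / (1 - h₀)) := by ring
    nlinarith [hlog]
  refine ⟨hg, ?_, h₀, h0pos, h0lt, hfpos⟩
  have hbdd : BddAbove ((fun h => fFun h a t) '' Set.Ico 0 1) := by
    refine ⟨a / 2, ?_⟩
    rintro y ⟨h, ⟨hh0, hh1⟩, rfl⟩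
    simp only [fFun]
    have hl : Real.log (1 - h) ≤ 0 := Real.log_nonpos (by linarith) (by linarith)
    have hd : 0 ≤ t * h / (1 - h) := by
      apply div_nonneg (by positivity) (by linarith)
    have : a * h ≤ a := by nlinarith
    linarith
  have hmem : fFun h₀ a t ∈ (fun h => fFun h a t) '' Set.Ico 0 1 :=
    ⟨h₀, ⟨le_of_lt h0pos, h0lt⟩, rfl⟩
  exact lt_of_lt_of_le hfpos (le_csSup hbdd hmem)
end
end

section
/- For every a, t > 0, the point h_f(a,t) = (2a − 1 − √(4at+1))/(2a) satisfies h_f(a,t) < 1 and f(h,a,t) ≤ f(h_f(a,t),a,t) for all h < 1; moreover h_f(a,t) < 0 if a < t + 1 and h_f(a,t) ∈ (0,1) if a > t + 1. -/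
open MeasureTheory ProbabilityTheory

noncomputable section

theorem stmt2 (a t : ℝ) (ha : 0 < a) (ht : 0 < t) :
    (2 * a - 1 - Real.sqrt (4 * a * t + 1)) / (2 * a) < 1 ∧
    (∀ h : ℝ, h < 1 →
      fFun h a t ≤ fFun ((2 * a - 1 - Real.sqrt (4 * a * t + 1)) / (2 * a)) a t) ∧
    (a < t + 1 → (2 * a - 1 - Real.sqrt (4 * a * t + 1)) / (2 * a) < 0) ∧
    (t + 1 < a → 0 < (2 * a - 1 - Real.sqrt (4 * a * t + 1)) / (2 * a) ∧
      (2 * a - 1 - Real.sqrt (4 * a * t + 1)) / (2 * a) < 1) := by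
  set sq := Real.sqrt (4 * a * t + 1) with hsqdef
  have hD : (1:ℝ) < 4 * a * t + 1 := by nlinarith
  have hsq1 : 1 < sq := by
    nlinarith [Real.sq_sqrt (show (0:ℝ) ≤ 4 * a * t + 1 by nlinarith),
      Real.sqrt_nonneg (4 * a * t + 1), hsqdef]
  have hsqsq : sq ^ 2 = 4 * a * t + 1 := Real.sq_sqrt (by linarith)
  set h₀ := (2 * a - 1 - sq) / (2 * a) with hh0
  have h2a : (0:ℝ) < 2 * a := by linarith
  have hs0 : 1 - h₀ = (1 + sq) / (2 * a) := by
    rw [hh0]; field_simp; ring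
  have hs0pos : 0 < 1 - h₀ := by rw [hs0]; positivity
  have h01 : h₀ < 1 := by linarith
  have hquad : a * (1 - h₀) ^ 2 - (1 - h₀) - t = 0 := by
    rw [hs0]; field_simp; nlinarith [hsqsq]
  have has0 : 2 * a * (1 - h₀) = 1 + sq := by
    rw [hs0]; field_simp
  have hder : ∀ x : ℝ, x < 1 → HasDerivAt (fun y => fFun y a t)
      ((a * (1 - x) ^ 2 - (1 - x) - t) / (2 * (1 - x) ^ 2)) x := by
    intro x hx
    have hxs : (0:ℝ) < 1 - x := by linarith
    have hne : (1 - x) ≠ 0 := ne_of_gt hxs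
    have d1 : HasDerivAt (fun y : ℝ => a * y) a x := by
      simpa using (hasDerivAt_id x).const_mul a
    have d2 : HasDerivAt (fun y : ℝ => 1 - y) (-1) x := by
      simpa using (hasDerivAt_id x).const_sub 1
    have d3 : HasDerivAt (fun y : ℝ => Real.log (1 - y)) ((1 - x)⁻¹ * (-1)) x :=
      (Real.hasDerivAt_log hne).comp x d2
    have d4 : HasDerivAt (fun y : ℝ => t * y) t x := by
      simpa using (hasDerivAt_id x).const_mul t
    have d5 : HasDerivAt (fun y : ℝ => t * y / (1 - y))
        ((t * (1 - x) - t * x * (-1)) / (1 - x) ^ 2) x := d4.div d2 hne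
    have key := ((d1.add d3).sub d5).div_const 2
    have heq : (a + (1 - x)⁻¹ * (-1) - (t * (1 - x) - t * x * (-1)) / (1 - x) ^ 2) / 2
        = (a * (1 - x) ^ 2 - (1 - x) - t) / (2 * (1 - x) ^ 2) := by
      field_simp; ring
    rw [heq] at key
    exact key
  have hderiv : ∀ x : ℝ, x < 1 → deriv (fun y => fFun y a t) x
      = (a * (1 - x) ^ 2 - (1 - x) - t) / (2 * (1 - x) ^ 2) :=
    fun x hx => (hder x hx).deriv
  have hmono : StrictMonoOn (fun y => fFun y a t) (Set.Iic h₀) := by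
    apply strictMonoOn_of_deriv_pos (convex_Iic h₀)
    · exact fun x hx => (hder x (lt_of_le_of_lt hx h01)).continuousAt.continuousWithinAt
    · intro x hx
      rw [interior_Iic] at hx
      have hxlt : x < h₀ := hx
      have hx1 : x < 1 := lt_trans hxlt h01
      rw [hderiv x hx1]
      have hxs : (0:ℝ) < 1 - x := by linarith
      have hss : 1 - h₀ < 1 - x := by linarith [hxlt]
      apply div_pos _ (by positivity)
      nlinarith [hquad, has0, mul_pos (sub_pos.mpr hss)
        (show (0:ℝ) < a * ((1 - x) + (1 - h₀)) - 1 by nlinarith [has0, hsq1])]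
  have hanti : StrictAntiOn (fun y => fFun y a t) (Set.Ico h₀ 1) := by
    apply strictAntiOn_of_deriv_neg (convex_Ico h₀ 1)
    · exact fun x hx => (hder x hx.2).continuousAt.continuousWithinAt
    · intro x hx
      rw [interior_Ico] at hx
      rw [hderiv x hx.2]
      have hxs : (0:ℝ) < 1 - x := by linarith [hx.2]
      have hss : 1 - x < 1 - h₀ := by linarith [hx.1]
      apply div_neg_of_neg_of_pos _ (by positivity)
      nlinarith [hquad, has0, mul_pos (sub_pos.mpr hss)
        (show (0:ℝ) < a * ((1 - x) + (1 - h₀)) - 1 by nlinarith [has0, hsq1])]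
  refine ⟨h01, ?_, ?_, ?_⟩
  · intro h hh
    rcases lt_trichotomy h h₀ with hlt | heq | hgt
    · exact (hmono (Set.mem_Iic.mpr hlt.le) (Set.mem_Iic.mpr le_rfl) hlt).le
    · rw [heq]
    · exact (hanti (Set.mem_Ico.mpr ⟨le_rfl, h01⟩) (Set.mem_Ico.mpr ⟨hgt.le, hh⟩) hgt).le
  · intro hat
    apply div_neg_of_neg_of_pos _ h2a
    nlinarith [hsqsq, hsq1, Real.sqrt_nonneg (4 * a * t + 1)]
  · intro hat
    refine ⟨div_pos ?_ h2a, h01⟩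
    nlinarith [hsqsq, hsq1]
end
end

section
/- Let τ > 0 and A > 1 + τ. Then f_o(A,τ) > 0, and for every square-summable θ : ℕ → ℝ and every integer d > d_τ(θ): P_θ({x ∈ ℝ^ℕ : crit_A(x,d) ≤ crit_A(x,d_τ(θ))}) ≤ exp( −f_o(A,τ) · (d − d_τ(θ)) ). -/
open MeasureTheory ProbabilityTheory

noncomputable section

/-! ### Auxiliary lemmas -/

section Aux

open Real
open scoped NNReal ENNReal

lemma integral_pi_prod' {d : ℕ} (μ : Fin d → Measure ℝ) [h : ∀ i, SigmaFinite (μ i)]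
    (f : Fin d → ℝ → ℝ) :
    ∫ y : Fin d → ℝ, ∏ i, f i (y i) ∂(Measure.pi μ) = ∏ i, ∫ x, f i x ∂(μ i) := by
  exact MeasureTheory.integral_fin_nat_prod_eq_prod (E := fun _ => ℝ) (μ := μ) f

lemma integrable_pi_prod' {d : ℕ} (μ : Fin d → Measure ℝ) [h : ∀ i, SigmaFinite (μ i)]
    (f : Fin d → ℝ → ℝ) (hf : ∀ i, Integrable (f i) (μ i)) :
    Integrable (fun y : Fin d → ℝ => ∏ i, f i (y i)) (Measure.pi μ) := by
  exact MeasureTheory.Integrable.fintype_prod_dep (E := fun _ => ℝ) (f := f) (μ := μ) hf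

lemma gauss_sq_exp_aux {ε : ℝ} (hε : 0 < ε) {h : ℝ} (h1 : h < 1) (m : ℝ) (x : ℝ) :
    gaussianPDFReal m (ε^2).toNNReal x * Real.exp (h/(2*ε^2) * x^2)
      = ((Real.sqrt (2 * π * ((ε^2).toNNReal : ℝ)))⁻¹ * Real.exp (h/(2*ε^2) * m^2 / (1-h)))
        * Real.exp (-((1-h)/(2*ε^2)) * (x - m/(1-h))^2) := by
  have hε2 : (((ε^2).toNNReal : ℝ≥0) : ℝ) = ε^2 := Real.coe_toNNReal _ (sq_nonneg ε)
  have hu : (0:ℝ) < 1 - h := by linarith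
  have hne : ε^2 ≠ 0 := by positivity
  have hsum : -(x - m)^2/(2*ε^2) + h/(2*ε^2)*x^2
      = h/(2*ε^2)*m^2/(1-h) + -((1-h)/(2*ε^2))*(x - m/(1-h))^2 := by
    field_simp
    ring
  calc gaussianPDFReal m (ε^2).toNNReal x * Real.exp (h/(2*ε^2) * x^2)
      = (Real.sqrt (2 * π * ((ε^2).toNNReal : ℝ)))⁻¹
        * Real.exp (-(x - m)^2/(2*ε^2) + h/(2*ε^2)*x^2) := by
        rw [gaussianPDFReal_def, Real.exp_add, hε2]; ring
    _ = (Real.sqrt (2 * π * ((ε^2).toNNReal : ℝ)))⁻¹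
        * Real.exp (h/(2*ε^2)*m^2/(1-h) + -((1-h)/(2*ε^2))*(x - m/(1-h))^2) := by rw [hsum]
    _ = _ := by rw [Real.exp_add]; ring

lemma gauss_sq_integral {ε : ℝ} (hε : 0 < ε) {h : ℝ} (h1 : h < 1) (m : ℝ) :
    ∫ x, Real.exp (h/(2*ε^2) * x^2) ∂(gaussianReal m (ε^2).toNNReal)
      = (Real.sqrt (1-h))⁻¹ * Real.exp (h/(2*ε^2) * m^2 / (1-h)) := by
  have hε2 : (((ε^2).toNNReal : ℝ≥0) : ℝ) = ε^2 := Real.coe_toNNReal _ (sq_nonneg ε)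
  have hv : ((ε^2).toNNReal : ℝ≥0) ≠ 0 := by
    simp only [ne_eq, Real.toNNReal_eq_zero, not_le]; positivity
  have hu : (0:ℝ) < 1 - h := by linarith
  have hb : (0:ℝ) < (1-h)/(2*ε^2) := by positivity
  rw [gaussianReal_of_var_ne_zero _ hv]
  rw [show gaussianPDF m (ε^2).toNNReal
      = fun x => ((Real.toNNReal (gaussianPDFReal m (ε^2).toNNReal x) : ℝ≥0) : ℝ≥0∞) from rfl]
  rw [integral_withDensity_eq_integral_smul ((measurable_gaussianPDFReal _ _).real_toNNReal) _]
  have key : ∀ x : ℝ, (Real.toNNReal (gaussianPDFReal m (ε^2).toNNReal x) : ℝ≥0)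
      • Real.exp (h/(2*ε^2) * x^2)
      = ((Real.sqrt (2 * π * ((ε^2).toNNReal : ℝ)))⁻¹ * Real.exp (h/(2*ε^2) * m^2 / (1-h)))
        * Real.exp (-((1-h)/(2*ε^2)) * (x - m/(1-h))^2) := by
    intro x
    rw [NNReal.smul_def, Real.coe_toNNReal _ (gaussianPDFReal_nonneg _ _ _), smul_eq_mul]
    exact gauss_sq_exp_aux hε h1 m x
  simp only [key]
  rw [integral_const_mul]
  rw [integral_sub_right_eq_self (fun y => Real.exp (-((1-h)/(2*ε^2)) * y^2)) (m/(1-h))]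
  rw [integral_gaussian]
  have hπ : (0:ℝ) < 2 * π * ε^2 := by positivity
  have hq : Real.sqrt (π / ((1-h)/(2*ε^2))) = Real.sqrt (2*π*ε^2) / Real.sqrt (1-h) := by
    rw [show π / ((1-h)/(2*ε^2)) = (2*π*ε^2) / (1-h) by field_simp]
    exact Real.sqrt_div hπ.le _
  rw [hε2, hq]
  have hs : Real.sqrt (2*π*ε^2) ≠ 0 := by positivity
  field_simp

lemma gauss_sq_integrable {ε : ℝ} (hε : 0 < ε) {h : ℝ} (h1 : h < 1) (m : ℝ) :
    Integrable (fun x => Real.exp (h/(2*ε^2) * x^2)) (gaussianReal m (ε^2).toNNReal) := by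
  have hv : ((ε^2).toNNReal : ℝ≥0) ≠ 0 := by
    simp only [ne_eq, Real.toNNReal_eq_zero, not_le]; positivity
  have hu : (0:ℝ) < 1 - h := by linarith
  have hb : (0:ℝ) < (1-h)/(2*ε^2) := by positivity
  rw [gaussianReal_of_var_ne_zero _ hv]
  rw [show gaussianPDF m (ε^2).toNNReal
      = fun x => ((Real.toNNReal (gaussianPDFReal m (ε^2).toNNReal x) : ℝ≥0) : ℝ≥0∞) from rfl]
  rw [integrable_withDensity_iff_integrable_smul ((measurable_gaussianPDFReal _ _).real_toNNReal)]
  have key : (fun x : ℝ => (Real.toNNReal (gaussianPDFReal m (ε^2).toNNReal x) : ℝ≥0)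
      • Real.exp (h/(2*ε^2) * x^2))
      = fun x => ((Real.sqrt (2 * π * ((ε^2).toNNReal : ℝ)))⁻¹ * Real.exp (h/(2*ε^2) * m^2 / (1-h)))
        * Real.exp (-((1-h)/(2*ε^2)) * (x - m/(1-h))^2) := by
    funext x
    rw [NNReal.smul_def, Real.coe_toNNReal _ (gaussianPDFReal_nonneg _ _ _), smul_eq_mul]
    exact gauss_sq_exp_aux hε h1 m x
  rw [key]
  exact ((integrable_exp_neg_mul_sq hb).comp_sub_right (m/(1-h))).const_mul _

lemma fFun_zero (a t : ℝ) : fFun 0 a t = 0 := by simp [fFun]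

lemma fFun_le_half (a t : ℝ) (ha : 0 < a) (ht : 0 < t) {h : ℝ} (h0 : 0 ≤ h) (h1 : h < 1) :
    fFun h a t ≤ a / 2 := by
  have hu : (0:ℝ) < 1 - h := by linarith
  have l1 : a * h ≤ a := by nlinarith
  have l2 : Real.log (1 - h) ≤ 0 := Real.log_nonpos hu.le (by linarith)
  have l3 : 0 ≤ t * h / (1 - h) := by positivity
  unfold fFun; linarith

lemma fFun_exists_max (a t : ℝ) (ha : 0 < a) (ht : 0 < t) :
    ∃ h0, 0 ≤ h0 ∧ h0 < 1 ∧ ∀ h, 0 ≤ h → h < 1 → fFun h a t ≤ fFun h0 a t := by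
  set h₁ : ℝ := 1 - Real.exp (-a) with hh₁
  have he : Real.exp (-a) < 1 := Real.exp_lt_one_iff.mpr (by linarith)
  have hep : 0 < Real.exp (-a) := Real.exp_pos _
  have h₁0 : 0 < h₁ := by simp [hh₁]; linarith
  have h₁1 : h₁ < 1 := by simp [hh₁]; linarith
  have hcont : ContinuousOn (fun h => fFun h a t) (Set.Icc 0 h₁) := by
    have hne : ∀ h ∈ Set.Icc (0:ℝ) h₁, 1 - h ≠ 0 := fun h hh => by
      have := hh.2; have : h < 1 := lt_of_le_of_lt this h₁1; linarith
    unfold fFun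
    apply ContinuousOn.div_const
    apply ContinuousOn.sub
    · apply ContinuousOn.add
      · fun_prop
      · exact ContinuousOn.log (by fun_prop) hne
    · exact ContinuousOn.div (by fun_prop) (by fun_prop) hne
  obtain ⟨h0, hmem, hmax⟩ := isCompact_Icc.exists_isMaxOn (Set.nonempty_Icc.mpr h₁0.le) hcont
  refine ⟨h0, hmem.1, lt_of_le_of_lt hmem.2 h₁1, fun h hh0 hh1 => ?_⟩
  by_cases hc : h ≤ h₁
  · exact hmax ⟨hh0, hc⟩
  · push_neg at hc
    have hu : (0:ℝ) < 1 - h := by linarith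
    have hlog : Real.log (1 - h) < -a := by
      have : 1 - h < Real.exp (-a) := by simp [hh₁] at hc ⊢; linarith
      calc Real.log (1-h) < Real.log (Real.exp (-a)) := Real.log_lt_log hu this
        _ = -a := Real.log_exp _
    have l1 : a * h ≤ a := by nlinarith
    have l3 : 0 ≤ t * h / (1 - h) := by positivity
    have : fFun h a t ≤ 0 := by unfold fFun; linarith
    have h0max : fFun 0 a t ≤ fFun h0 a t := hmax ⟨le_refl _, h₁0.le⟩
    rw [fFun_zero] at h0max
    linarith

lemma fSup_eq_max (a t : ℝ) (ha : 0 < a) (ht : 0 < t) :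
    ∃ h0, 0 ≤ h0 ∧ h0 < 1 ∧ fSup a t = fFun h0 a t := by
  obtain ⟨h0, hh0, hh1, hmax⟩ := fFun_exists_max a t ha ht
  refine ⟨h0, hh0, hh1, le_antisymm ?_ ?_⟩
  · apply csSup_le
    · exact ⟨fFun 0 a t, Set.mem_image_of_mem _ ⟨le_refl _, zero_lt_one⟩⟩
    · rintro y ⟨h, ⟨hh0', hh1'⟩, rfl⟩
      exact hmax h hh0' hh1'
  · apply le_csSup
    · exact ⟨fFun h0 a t, by rintro y ⟨h, ⟨hh0', hh1'⟩, rfl⟩; exact hmax h hh0' hh1'⟩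
    · exact Set.mem_image_of_mem _ ⟨hh0, hh1⟩

lemma fSup_pos' {a t : ℝ} (ht : 0 < t) (ha : 1 + t < a) : 0 < fSup a t := by
  have ha0 : 0 < a := by linarith
  set h₂ : ℝ := (1 - (1+t)/a)/2 with hh₂
  have hq : (1+t)/a < 1 := (div_lt_one ha0).mpr (by linarith)
  have hqpos : 0 < (1+t)/a := by positivity
  have h₂0 : 0 < h₂ := by rw [hh₂]; linarith
  have h₂1 : h₂ < 1 := by rw [hh₂]; linarith
  have hu : (0:ℝ) < 1 - h₂ := by linarith
  have hlog : -(h₂/(1-h₂)) ≤ Real.log (1 - h₂) := by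
    have := Real.log_le_sub_one_of_pos (show (0:ℝ) < (1-h₂)⁻¹ by positivity)
    rw [Real.log_inv] at this
    have h2 : (1-h₂)⁻¹ - 1 = h₂/(1-h₂) := by field_simp; ring
    linarith [this, h2.le]
  have hkey : 0 < fFun h₂ a t := by
    have hmain : (1+t)/(1-h₂) < a := by
      rw [div_lt_iff₀ hu]
      have : a * (1 - h₂) = (a + (1+t))/2 := by rw [hh₂]; field_simp; ring
      rw [this]; linarith
    have : a * h₂ + Real.log (1-h₂) - t*h₂/(1-h₂)
        ≥ a * h₂ - h₂/(1-h₂) - t*h₂/(1-h₂) := by linarith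
    have h3 : a * h₂ - h₂/(1-h₂) - t*h₂/(1-h₂) = (a - (1+t)/(1-h₂)) * h₂ := by
      field_simp; ring
    unfold fFun
    have h4 : 0 < (a - (1+t)/(1-h₂)) * h₂ := by
      apply mul_pos _ h₂0; linarith
    linarith
  calc (0:ℝ) < fFun h₂ a t := hkey
    _ ≤ fSup a t := by
      apply le_csSup
      · exact ⟨a/2, by rintro y ⟨h, ⟨hh0', hh1'⟩, rfl⟩; exact fFun_le_half a t ha0 ht hh0' hh1'⟩
      · exact Set.mem_image_of_mem _ ⟨h₂0.le, h₂1⟩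

lemma tailSum_nonneg (θ : ℕ → ℝ) (d : ℕ) : 0 ≤ tailSum θ d :=
  tsum_nonneg (fun i => by by_cases h : d < i <;> simp [h, sq_nonneg])

lemma summable_tail (θ : ℕ → ℝ) (hθ : Summable (fun i => θ i ^ 2)) (d : ℕ) :
    Summable (fun i => if d < i then θ i ^ 2 else 0) := by
  apply Summable.of_nonneg_of_le (fun i => by by_cases h : d < i <;> simp [h, sq_nonneg])
    (fun i => ?_) hθ
  by_cases h : d < i <;> simp [h, sq_nonneg]

lemma tailSum_split (θ : ℕ → ℝ) (hθ : Summable (fun i => θ i ^ 2)) {a b : ℕ} (hab : a ≤ b) :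
    tailSum θ a = (∑ i ∈ Finset.Ioc a b, θ i ^ 2) + tailSum θ b := by
  have hp : ∀ i : ℕ, (if a < i then θ i ^ 2 else 0)
      = (if i ∈ Finset.Ioc a b then θ i ^ 2 else 0) + (if b < i then θ i ^ 2 else 0) := by
    intro i
    by_cases h1 : a < i <;> by_cases h2 : i ≤ b <;> by_cases h3 : b < i <;>
      simp [Finset.mem_Ioc, h1, h2, h3] <;> omega
  have hs1 : Summable (fun i => if i ∈ Finset.Ioc a b then θ i ^ 2 else 0) :=
    summable_of_ne_finset_zero (s := Finset.Ioc a b) (fun i hi => if_neg hi)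
  have hs2 := summable_tail θ hθ b
  unfold tailSum
  calc ∑' i : ℕ, (if a < i then θ i ^ 2 else 0)
      = ∑' i : ℕ, ((if i ∈ Finset.Ioc a b then θ i ^ 2 else 0)
          + (if b < i then θ i ^ 2 else 0)) := tsum_congr hp
    _ = (∑' i : ℕ, if i ∈ Finset.Ioc a b then θ i ^ 2 else 0)
        + ∑' i : ℕ, (if b < i then θ i ^ 2 else 0) := Summable.tsum_add hs1 hs2
    _ = (∑ i ∈ Finset.Ioc a b, θ i ^ 2) + ∑' i : ℕ, (if b < i then θ i ^ 2 else 0) := by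
        congr 1
        rw [tsum_eq_sum (s := Finset.Ioc a b) (fun i hi => if_neg hi)]
        exact Finset.sum_congr rfl (fun i hi => if_pos hi)

lemma effDim_spec (ε τ : ℝ) (hε : 0 < ε) (hτ : 0 < τ) (θ : ℕ → ℝ) :
    1 ≤ effDim ε τ θ ∧ ∀ d' : ℕ, 1 ≤ d' → rErr ε τ θ (effDim ε τ θ) ≤ rErr ε τ θ d' := by
  have hne : {d : ℕ | 1 ≤ d ∧ ∀ d' : ℕ, 1 ≤ d' → rErr ε τ θ d ≤ rErr ε τ θ d'}.Nonempty := by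
    obtain ⟨N, hN⟩ := exists_nat_ge (rErr ε τ θ 1 / (τ * ε ^ 2))
    have hN1 : 1 ≤ N + 1 := by omega
    obtain ⟨d₀, hd₀mem, hd₀min⟩ := Finset.exists_min_image (Finset.Icc 1 (N+1))
      (rErr ε τ θ) ⟨1, Finset.mem_Icc.mpr ⟨le_refl _, hN1⟩⟩
    refine ⟨d₀, (Finset.mem_Icc.mp hd₀mem).1, fun d' hd' => ?_⟩
    by_cases hc : d' ≤ N + 1
    · exact hd₀min d' (Finset.mem_Icc.mpr ⟨hd', hc⟩)
    · push_neg at hc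
      have h1 : rErr ε τ θ d₀ ≤ rErr ε τ θ 1 := hd₀min 1 (Finset.mem_Icc.mpr ⟨le_refl _, hN1⟩)
      have h2 : rErr ε τ θ 1 ≤ τ * d' * ε ^ 2 := by
        have hpos : (0:ℝ) < τ * ε^2 := by positivity
        have hNd : ((N:ℝ)) ≤ (d' : ℝ) := by
          have : (N:ℝ) + 1 < (d':ℝ) + 1 := by exact_mod_cast by omega
          linarith
        calc rErr ε τ θ 1 ≤ (N:ℝ) * (τ * ε^2) := by
              rw [← div_le_iff₀ hpos]; exact hN
          _ ≤ (d':ℝ) * (τ * ε^2) := by nlinarith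
          _ = τ * d' * ε ^ 2 := by ring
      have h3 : τ * d' * ε^2 ≤ rErr ε τ θ d' := by
        unfold rErr; linarith [tailSum_nonneg θ d']
      linarith
  exact Nat.sInf_mem hne

lemma filter_card (d b : ℕ) :
    (Finset.univ.filter fun i : Fin d => b ≤ (i:ℕ)).card = d - b := by
  rw [Finset.card_filter]
  rw [Fin.sum_univ_eq_sum_range (fun j => if b ≤ j then 1 else 0) d]
  rw [← Finset.card_filter]
  have : (Finset.range d).filter (fun j => b ≤ j) = Finset.Ico b d := by
    ext j; simp [Finset.mem_Ico, Finset.mem_filter, Finset.mem_range]; omega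
  rw [this, Nat.card_Ico]

lemma sum_fin_shift (d b : ℕ) (φ : ℕ → ℝ) :
    ∑ i ∈ Finset.univ.filter (fun i : Fin d => b ≤ (i:ℕ)), φ ((i:ℕ)+1)
      = ∑ j ∈ Finset.Ioc b d, φ j := by
  rw [Finset.sum_filter]
  rw [Fin.sum_univ_eq_sum_range (fun j => if b ≤ j then φ (j+1) else 0) d]
  rw [← Finset.sum_filter]
  have : (Finset.range d).filter (fun j => b ≤ j) = Finset.Ico b d := by
    ext j; simp [Finset.mem_Ico, Finset.mem_filter, Finset.mem_range]; omega
  rw [this]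
  apply Finset.sum_nbij' (i := fun j => j + 1) (j := fun j => j - 1) <;>
    intros <;> simp_all [Finset.mem_Ico, Finset.mem_Ioc] <;> omega

lemma sum_Icc_split (d b : ℕ) (hbd : b ≤ d) (φ : ℕ → ℝ) :
    ∑ i ∈ Finset.Icc 1 d, φ i = (∑ i ∈ Finset.Icc 1 b, φ i) + ∑ i ∈ Finset.Ioc b d, φ i := by
  have h1 : Finset.Icc 1 d = Finset.Ioc 0 d := by ext i; simp; omega
  have h2 : Finset.Icc 1 b = Finset.Ioc 0 b := by ext i; simp; omega
  rw [h1, h2]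
  exact (Finset.sum_Ioc_consecutive _ (Nat.zero_le b) hbd).symm

end Aux

theorem stmt8 (ε τ A : ℝ) (hε : 0 < ε) (hτ : 0 < τ) (hA : 1 + τ < A) :
    0 < fSup A τ ∧
    ∀ θ : ℕ → ℝ, Summable (fun i => θ i ^ 2) →
    ∀ d : ℕ, effDim ε τ θ < d →
    ∀ P : Measure (ℕ → ℝ), IsGaussianProduct ε θ P →
    P {x | critF ε A x d ≤ critF ε A x (effDim ε τ θ)} ≤
      ENNReal.ofReal (Real.exp (-(fSup A τ) * ((d : ℝ) - effDim ε τ θ))) := by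
  have hA0 : 0 < A := by linarith
  refine ⟨fSup_pos' hτ hA, ?_⟩
  obtain ⟨h0, hh00, hh01, hfs⟩ := fSup_eq_max A τ hA0 hτ
  intro θ hθ d hd P hP
  obtain ⟨hb1, hbmin⟩ := effDim_spec ε τ hε hτ θ
  set b := effDim ε τ θ with hbdef
  have hbd : b ≤ d := hd.le
  have hκ0 : (0:ℝ) < (d:ℝ) - (b:ℝ) := by
    have : (b:ℝ) < (d:ℝ) := by exact_mod_cast hd
    linarith
  set κ : ℝ := (d:ℝ) - (b:ℝ) with hκdef
  -- tail bound
  have hS : (∑ i ∈ Finset.Ioc b d, θ i ^ 2) ≤ τ * κ * ε^2 := by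
    have hsplit := tailSum_split θ hθ hbd
    have hrb : rErr ε τ θ b ≤ rErr ε τ θ d := hbmin d (by omega)
    unfold rErr at hrb
    rw [hκdef]
    nlinarith [hrb, hsplit]
  set T := Finset.univ.filter (fun i : Fin d => b ≤ (i:ℕ)) with hTdef
  set X : (Fin d → ℝ) → ℝ := fun y => ∑ i ∈ T, y i ^ 2 with hXdef
  set c₀ : ℝ := A * ε^2 * κ with hc₀def
  set π : (ℕ → ℝ) → (Fin d → ℝ) := fun x (i : Fin d) => x ((i:ℕ) + 1) with hπdef
  have hπmeas : Measurable π :=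
    measurable_pi_lambda _ (fun i => measurable_pi_apply _)
  have hXmeas : Measurable X :=
    Finset.measurable_sum _ (fun i _ => (measurable_pi_apply i).pow_const 2)
  have hBmeas : MeasurableSet {y : Fin d → ℝ | c₀ ≤ X y} :=
    measurableSet_le measurable_const hXmeas
  -- the event as a preimage
  have hsum_eq : ∀ x : ℕ → ℝ, X (π x) = ∑ j ∈ Finset.Ioc b d, x j ^ 2 := by
    intro x
    rw [hXdef, hTdef]
    exact sum_fin_shift d b (fun j => x j ^ 2)
  have hevent : {x : ℕ → ℝ | critF ε A x d ≤ critF ε A x b} = π ⁻¹' {y | c₀ ≤ X y} := by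
    ext x
    simp only [Set.mem_setOf_eq, Set.mem_preimage, hsum_eq x]
    unfold critF
    rw [sum_Icc_split d b hbd (fun i => x i ^ 2)]
    rw [hc₀def, hκdef]
    constructor <;> intro hx <;> nlinarith [hx]
  obtain ⟨hPprob, hPmap⟩ := hP
  set μs : Fin d → Measure ℝ :=
    fun i : Fin d => gaussianReal (θ ((i:ℕ) + 1)) ((ε ^ 2).toNNReal) with hμsdef
  haveI : ∀ i, IsProbabilityMeasure (μs i) := fun i => by
    rw [hμsdef]; infer_instance
  haveI : IsProbabilityMeasure (Measure.pi μs) := by infer_instance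
  set t : ℝ := h0 / (2 * ε^2) with htdef
  have ht0 : 0 ≤ t := by rw [htdef]; positivity
  have hu : (0:ℝ) < 1 - h0 := by linarith
  set G : Fin d → ℝ → ℝ :=
    fun i x => if b ≤ (i:ℕ) then Real.exp (t * x^2) else 1 with hGdef
  have hprod : ∀ y : Fin d → ℝ, Real.exp (t * X y) = ∏ i, G i (y i) := by
    intro y
    rw [hXdef, Finset.mul_sum, Real.exp_sum, hGdef, hTdef]
    rw [Finset.prod_filter]
  have h_int : Integrable (fun y => Real.exp (t * X y)) (Measure.pi μs) := by
    simp only [hprod]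
    apply integrable_pi_prod' μs G
    intro i
    rw [hGdef]
    by_cases hc : b ≤ (i:ℕ)
    · simp only [if_pos hc]
      have := gauss_sq_integrable hε hh01 (θ ((i:ℕ)+1))
      rw [htdef]
      exact this
    · simp only [if_neg hc]
      exact integrable_const 1
  have cher := measure_ge_le_exp_mul_mgf (μ := Measure.pi μs) (X := X) c₀ ht0 h_int
  -- compute the mgf
  have hmgf : mgf X (Measure.pi μs) t
      = ((Real.sqrt (1-h0))⁻¹) ^ (d - b)
        * Real.exp (t * (∑ j ∈ Finset.Ioc b d, θ j ^ 2) / (1-h0)) := by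
    have : mgf X (Measure.pi μs) t = ∫ y, Real.exp (t * X y) ∂(Measure.pi μs) := rfl
    rw [this]
    simp only [hprod]
    rw [integral_pi_prod' μs G]
    have hint : ∀ i : Fin d, ∫ x, G i x ∂(μs i)
        = if b ≤ (i:ℕ) then
            (Real.sqrt (1-h0))⁻¹ * Real.exp (t * (θ ((i:ℕ)+1))^2 / (1-h0))
          else 1 := by
      intro i
      rw [hGdef]
      by_cases hc : b ≤ (i:ℕ)
      · simp only [if_pos hc]
        rw [htdef]
        exact gauss_sq_integral hε hh01 (θ ((i:ℕ)+1))
      · simp only [if_neg hc]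
        simp
    simp only [hint]
    rw [← Finset.prod_filter, ← hTdef]
    rw [Finset.prod_mul_distrib, Finset.prod_const]
    have hcard : T.card = d - b := by rw [hTdef]; exact filter_card d b
    rw [hcard]
    congr 1
    rw [← Real.exp_sum]
    congr 1
    have := sum_fin_shift d b (fun j => t * θ j ^ 2 / (1-h0))
    rw [← hTdef] at this
    rw [this, Finset.mul_sum, Finset.sum_div]
  -- final numeric bound
  have hcast : ((d - b : ℕ) : ℝ) = κ := by
    rw [hκdef]; push_cast [Nat.cast_sub hbd]; ring
  have hnum : Real.exp (-t * c₀) * mgf X (Measure.pi μs) t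
      ≤ Real.exp (-(fSup A τ) * κ) := by
    rw [hmgf]
    have hsq : (Real.sqrt (1-h0))⁻¹ = Real.exp (-(Real.log (1-h0)/2)) := by
      rw [← Real.log_sqrt hu.le, Real.exp_neg, Real.exp_log (Real.sqrt_pos.mpr hu)]
    rw [hsq, ← Real.exp_nat_mul, hcast, ← Real.exp_add, ← Real.exp_add]
    rw [Real.exp_le_exp]
    rw [hfs]
    unfold fFun
    have hε2 : (0:ℝ) < ε^2 := by positivity
    have e1 : -t * c₀ = -(h0 * A * κ)/2 := by
      rw [htdef, hc₀def]; field_simp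
    have e3 : t * (∑ j ∈ Finset.Ioc b d, θ j ^ 2) / (1-h0) ≤ h0 * τ * κ / (2 * (1-h0)) := by
      have step : t * (∑ j ∈ Finset.Ioc b d, θ j ^ 2) ≤ t * (τ * κ * ε^2) :=
        mul_le_mul_of_nonneg_left hS ht0
      have e4 : t * (τ * κ * ε^2) / (1-h0) = h0 * τ * κ / (2 * (1-h0)) := by
        rw [htdef]; field_simp
      calc t * (∑ j ∈ Finset.Ioc b d, θ j ^ 2) / (1-h0)
          ≤ t * (τ * κ * ε^2) / (1-h0) := by gcongr
        _ = h0 * τ * κ / (2 * (1-h0)) := e4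
    have expand : -((A * h0 + Real.log (1 - h0) - τ * h0 / (1 - h0)) / 2) * κ
        = -(h0 * A * κ)/2 + κ * (-(Real.log (1-h0)/2)) + h0 * τ * κ / (2 * (1-h0)) := by
      field_simp; ring
    rw [expand, e1]
    linarith [e3]
  -- put everything together
  rw [hevent]
  have hmap : P (π ⁻¹' {y | c₀ ≤ X y}) = (Measure.pi μs) {y | c₀ ≤ X y} := by
    rw [← Measure.map_apply hπmeas hBmeas]
    rw [hπdef]
    rw [hPmap d]
  rw [hmap]
  rw [ENNReal.le_ofReal_iff_toReal_le (measure_ne_top _ _) (Real.exp_nonneg _)]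
  calc ((Measure.pi μs) {y | c₀ ≤ X y}).toReal
      ≤ Real.exp (-t * c₀) * mgf X (Measure.pi μs) t := cher
    _ ≤ Real.exp (-(fSup A τ) * κ) := hnum
end
end

section
/- (Verification of the lower-bound construction.) Let ε, τ > 0, let L₁, L₂ ≥ 1 be integers, and let Δ > 1 satisfy log Δ < 4τ(L₁+L₂). Define θ', θ'' : ℕ → ℝ by θ'_1 = θ''_1 = ε√(2τ); θ'_i = ε√τ − ε√(log Δ)/(2√(L₁+L₂)) and θ''_i = ε√τ + ε√(log Δ)/(2√(L₁+L₂)) for 2 ≤ i ≤ L₁+L₂+1; and θ'_i = θ''_i = 0 for i > L₁+L₂+1. Then ∑_i (θ'_i − θ''_i)² = ε² log Δ, d_τ(θ') = 1, and d_τ(θ'') = L₁+L₂+1. -/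
open MeasureTheory ProbabilityTheory

noncomputable section

lemma tailSum_eq_sum (θ : ℕ → ℝ) (N d : ℕ) (h : ∀ i, N < i → θ i = 0) :
    tailSum θ d = ∑ i ∈ Finset.Ioc d N, θ i ^ 2 := by
  unfold tailSum
  rw [tsum_eq_sum (s := Finset.Ioc d N) ?_]
  · refine Finset.sum_congr rfl fun i hi => ?_
    rw [Finset.mem_Ioc] at hi
    simp [hi.1]
  · intro i hi
    rw [Finset.mem_Ioc, not_and, not_le] at hi
    by_cases hd : d < i
    · simp [hd, h i (hi hd)]
    · simp [hd]

set_option maxHeartbeats 1000000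

theorem stmt17 (ε τ : ℝ) (hε : 0 < ε) (hτ : 0 < τ)
    (L₁ L₂ : ℕ) (hL₁ : 1 ≤ L₁) (hL₂ : 1 ≤ L₂)
    (Δ : ℝ) (hΔ : 1 < Δ) (hΔ' : Real.log Δ < 4 * τ * ((L₁ : ℝ) + L₂))
    (θ' θ'' : ℕ → ℝ)
    (h0' : θ' 0 = 0) (h0'' : θ'' 0 = 0)
    (h1' : θ' 1 = ε * Real.sqrt (2 * τ)) (h1'' : θ'' 1 = ε * Real.sqrt (2 * τ))
    (hmid' : ∀ i : ℕ, 2 ≤ i → i ≤ L₁ + L₂ + 1 →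
      θ' i = ε * Real.sqrt τ - ε * Real.sqrt (Real.log Δ) / (2 * Real.sqrt ((L₁ : ℝ) + L₂)))
    (hmid'' : ∀ i : ℕ, 2 ≤ i → i ≤ L₁ + L₂ + 1 →
      θ'' i = ε * Real.sqrt τ + ε * Real.sqrt (Real.log Δ) / (2 * Real.sqrt ((L₁ : ℝ) + L₂)))
    (htail' : ∀ i : ℕ, L₁ + L₂ + 1 < i → θ' i = 0)
    (htail'' : ∀ i : ℕ, L₁ + L₂ + 1 < i → θ'' i = 0) :
    (∑' i : ℕ, (θ' i - θ'' i) ^ 2) = ε ^ 2 * Real.log Δ ∧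
    effDim ε τ θ' = 1 ∧ effDim ε τ θ'' = L₁ + L₂ + 1 := by
  have hL2 : 2 ≤ L₁ + L₂ := by omega
  set N : ℕ := L₁ + L₂ + 1 with hNdef
  have hLR : (0:ℝ) < (L₁ : ℝ) + (L₂ : ℝ) := by
    have h1 : (1:ℝ) ≤ (L₁:ℝ) := by exact_mod_cast hL₁
    have h2 : (0:ℝ) ≤ (L₂:ℝ) := Nat.cast_nonneg _
    linarith
  have hlog : 0 < Real.log Δ := Real.log_pos hΔ
  set b : ℝ := ε * Real.sqrt (Real.log Δ) / (2 * Real.sqrt ((L₁ : ℝ) + L₂)) with hbdef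
  have hsL : Real.sqrt ((L₁:ℝ) + L₂) ^ 2 = (L₁:ℝ) + L₂ := Real.sq_sqrt hLR.le
  have hsLpos : 0 < Real.sqrt ((L₁:ℝ) + L₂) := Real.sqrt_pos.2 hLR
  have hslog : Real.sqrt (Real.log Δ) ^ 2 = Real.log Δ := Real.sq_sqrt hlog.le
  have hslogpos : 0 < Real.sqrt (Real.log Δ) := Real.sqrt_pos.2 hlog
  have hb : 0 < b := by rw [hbdef]; positivity
  have hb2 : b ^ 2 = ε ^ 2 * Real.log Δ / (4 * ((L₁:ℝ) + L₂)) := by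
    rw [hbdef, div_pow, mul_pow, mul_pow, hslog, hsL]; norm_num
  have hbτ : b ^ 2 < τ * ε ^ 2 := by
    rw [hb2, div_lt_iff₀ (by positivity)]
    nlinarith [mul_lt_mul_of_pos_left hΔ' (pow_pos hε 2)]
  have hετ : (ε * Real.sqrt τ) ^ 2 = τ * ε ^ 2 := by
    rw [mul_pow, Real.sq_sqrt hτ.le]; ring
  have hετpos : 0 < ε * Real.sqrt τ := mul_pos hε (Real.sqrt_pos.2 hτ)
  have hblt : b < ε * Real.sqrt τ := by nlinarith [hbτ, hετ, hb, hετpos]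
  set s' : ℝ := (ε * Real.sqrt τ - b) ^ 2 with hs'def
  set s'' : ℝ := (ε * Real.sqrt τ + b) ^ 2 with hs''def
  have hs'0 : 0 ≤ s' := sq_nonneg _
  have hs'lt : s' < τ * ε ^ 2 := by rw [hs'def]; nlinarith [hb, hblt, hετ]
  have hs''gt : τ * ε ^ 2 < s'' := by rw [hs''def]; nlinarith [hb, hετ, hετpos]
  -- tail sum formulas
  have tA' : ∀ d, 1 ≤ d → d ≤ N → tailSum θ' d = ((N - d : ℕ) : ℝ) * s' := by
    intro d h1 h2
    rw [tailSum_eq_sum θ' N d htail']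
    have hc : ∀ i ∈ Finset.Ioc d N, θ' i ^ 2 = s' := by
      intro i hi; rw [Finset.mem_Ioc] at hi
      rw [hmid' i (by omega) hi.2]
    rw [Finset.sum_congr rfl hc, Finset.sum_const, Nat.card_Ioc, nsmul_eq_mul]
  have tA'' : ∀ d, 1 ≤ d → d ≤ N → tailSum θ'' d = ((N - d : ℕ) : ℝ) * s'' := by
    intro d h1 h2
    rw [tailSum_eq_sum θ'' N d htail'']
    have hc : ∀ i ∈ Finset.Ioc d N, θ'' i ^ 2 = s'' := by
      intro i hi; rw [Finset.mem_Ioc] at hi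
      rw [hmid'' i (by omega) hi.2]
    rw [Finset.sum_congr rfl hc, Finset.sum_const, Nat.card_Ioc, nsmul_eq_mul]
  have tB' : ∀ d, N ≤ d → tailSum θ' d = 0 := by
    intro d hd
    rw [tailSum_eq_sum θ' N d htail', Finset.Ioc_eq_empty (not_lt.2 hd), Finset.sum_empty]
  have tB'' : ∀ d, N ≤ d → tailSum θ'' d = 0 := by
    intro d hd
    rw [tailSum_eq_sum θ'' N d htail'', Finset.Ioc_eq_empty (not_lt.2 hd), Finset.sum_empty]
  have hNcast : (1:ℝ) ≤ (N:ℝ) := by exact_mod_cast Nat.one_le_iff_ne_zero.2 (by omega)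
  -- Part 1 : the tsum
  have part1 : (∑' i : ℕ, (θ' i - θ'' i) ^ 2) = ε ^ 2 * Real.log Δ := by
    have hz : ∀ i ∉ Finset.Ioc 1 N, (θ' i - θ'' i) ^ 2 = 0 := by
      intro i hi
      rw [Finset.mem_Ioc, not_and, not_le] at hi
      rcases Nat.lt_or_ge i 2 with h | h
      · interval_cases i <;> simp [h0', h0'', h1', h1'']
      · have hNi : N < i := hi (by omega)
        rw [htail' i hNi, htail'' i hNi]; ring
    rw [tsum_eq_sum hz]
    have hc : ∀ i ∈ Finset.Ioc 1 N, (θ' i - θ'' i) ^ 2 = 4 * b ^ 2 := by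
      intro i hi; rw [Finset.mem_Ioc] at hi
      rw [hmid' i (by omega) hi.2, hmid'' i (by omega) hi.2]; ring
    rw [Finset.sum_congr rfl hc, Finset.sum_const, Nat.card_Ioc, nsmul_eq_mul]
    have hcast : ((N - 1 : ℕ) : ℝ) = (L₁ : ℝ) + L₂ := by
      rw [hNdef]; push_cast; ring
    rw [hcast, hb2]
    field_simp
  refine ⟨part1, ?_, ?_⟩
  -- effDim θ' = 1
  · have hmin' : ∀ d, 1 ≤ d → rErr ε τ θ' 1 ≤ rErr ε τ θ' d := by
      intro d hd
      have hdR : (1:ℝ) ≤ (d:ℝ) := by exact_mod_cast hd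
      rcases le_or_gt d N with h | h
      · have hdN : (d:ℝ) ≤ (N:ℝ) := by exact_mod_cast h
        unfold rErr
        rw [tA' 1 le_rfl (by omega), tA' d hd h,
          Nat.cast_sub (by omega), Nat.cast_sub h]
        push_cast
        nlinarith [hs'lt, hs'0]
      · unfold rErr
        rw [tA' 1 le_rfl (by omega), tB' d h.le, Nat.cast_sub (by omega)]
        have hdN' : ((L₁:ℝ) + L₂ + 1) ≤ (d:ℝ) := by
          rw [hNdef] at h; exact_mod_cast h.le
        push_cast [hNdef]
        nlinarith [mul_lt_mul_of_pos_right hs'lt hLR, mul_pos hτ (pow_pos hε 2), hdN']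
    have h1mem : 1 ∈ {d : ℕ | 1 ≤ d ∧ ∀ d' : ℕ, 1 ≤ d' → rErr ε τ θ' d ≤ rErr ε τ θ' d'} :=
      ⟨le_rfl, hmin'⟩
    have hle := Nat.sInf_le h1mem
    have hmem := Nat.sInf_mem (⟨1, h1mem⟩ : Set.Nonempty _)
    exact le_antisymm hle hmem.1
  -- effDim θ'' = N
  · have hstrict : ∀ d, 1 ≤ d → d ≠ N → rErr ε τ θ'' N < rErr ε τ θ'' d := by
      intro d hd hne
      have hdR : (1:ℝ) ≤ (d:ℝ) := by exact_mod_cast hd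
      rcases le_or_gt d N with h | h
      · have hdNlt : (d:ℝ) + 1 ≤ (L₁:ℝ) + L₂ + 1 := by
          have : d + 1 ≤ L₁ + L₂ + 1 := by omega
          exact_mod_cast this
        unfold rErr
        rw [tB'' N le_rfl, tA'' d hd h, Nat.cast_sub h]
        push_cast [hNdef]
        nlinarith [mul_lt_mul_of_pos_left hs''gt
          (show (0:ℝ) < (L₁:ℝ) + L₂ + 1 - d by linarith)]
      · have hdN : (N:ℝ) < (d:ℝ) := by exact_mod_cast h
        unfold rErr
        rw [tB'' N le_rfl, tB'' d h.le]
        nlinarith [pow_pos hε 2, hτ]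
    have hmin'' : ∀ d, 1 ≤ d → rErr ε τ θ'' N ≤ rErr ε τ θ'' d := by
      intro d hd
      by_cases hne : d = N
      · subst hne; exact le_rfl
      · exact (hstrict d hd hne).le
    have hNmem : N ∈ {d : ℕ | 1 ≤ d ∧ ∀ d' : ℕ, 1 ≤ d' → rErr ε τ θ'' d ≤ rErr ε τ θ'' d'} :=
      ⟨by omega, hmin''⟩
    have hle := Nat.sInf_le hNmem
    have hmem := Nat.sInf_mem (⟨N, hNmem⟩ : Set.Nonempty _)
    set m := sInf {d : ℕ | 1 ≤ d ∧ ∀ d' : ℕ, 1 ≤ d' → rErr ε τ θ'' d ≤ rErr ε τ θ'' d'} with hm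
    show m = N
    by_contra hne
    exact absurd (hmem.2 N (by omega)) (not_le.2 (hstrict m hmem.1 hne))
end
end
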